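/- The rank-one factored BFGS update yields a Cholesky-type factorization: if B = C C^T is symmetric positive definite, s^T y > 0, and one defines v = s/(s^T B s), u = sqrt((s^T B s)/(s^T y)) · y + B s, and C' = (I - u v^T) C, then C' (C')^T = B - (B s s^T B)/(s^T B s) + (y y^T)/(s^T y), which is the direct BFGS update of B. -/

import Mathlib

/-!
For symmetric `B`, `(1 - u vᵀ) B (1 - u vᵀ)ᵀ = B - u (Bv)ᵀ - (Bv) uᵀ + (vᵀBv) u uᵀ`.
With `v = s / (sᵀBs)` and `u = a + Bs` the cross terms cancel, leaving
`B - (Bs)(Bs)ᵀ / (sᵀBs) + a aᵀ / (sᵀBs)`; the choice `a = √(sᵀBs / sᵀy) y` turns the last term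
into `y yᵀ / sᵀy`.
-/

open Matrix

theorem Matrix.one_sub_vecMulVec_mul_mul_transpose {n R : Type*} [Fintype n] [DecidableEq n]
    [CommRing R] {B : Matrix n n R} (hB : B.IsSymm) (u v : n → R) :
    (1 - vecMulVec u v) * B * (1 - vecMulVec u v)ᵀ =
      B - vecMulVec u (B *ᵥ v) - vecMulVec (B *ᵥ v) u + (v ⬝ᵥ B *ᵥ v) • vecMulVec u u := by
  have hvB : v ᵥ* B = B *ᵥ v := by rw [← vecMul_transpose, hB.eq]
  rw [transpose_sub, transpose_one, transpose_vecMulVec]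
  simp only [sub_mul, mul_sub, one_mul, mul_one, vecMulVec_mul, mul_vecMulVec, hvB,
    vecMulVec_mulVec, op_smul_eq_smul, smul_vecMulVec, dotProduct_comm (B *ᵥ v)]
  abel

theorem Matrix.one_sub_vecMulVec_add_mulVec_mul_mul_transpose {n K : Type*} [Fintype n]
    [DecidableEq n] [Field K] {B : Matrix n n K} (hB : B.IsSymm) (a s : n → K)
    (hs : s ⬝ᵥ B *ᵥ s ≠ 0) :
    (1 - vecMulVec (a + B *ᵥ s) ((s ⬝ᵥ B *ᵥ s)⁻¹ • s)) * B *
        (1 - vecMulVec (a + B *ᵥ s) ((s ⬝ᵥ B *ᵥ s)⁻¹ • s))ᵀ =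
      B - (s ⬝ᵥ B *ᵥ s)⁻¹ • vecMulVec (B *ᵥ s) (B *ᵥ s) + (s ⬝ᵥ B *ᵥ s)⁻¹ • vecMulVec a a := by
  rw [one_sub_vecMulVec_mul_mul_transpose hB, mulVec_smul, smul_dotProduct, dotProduct_smul,
    smul_eq_mul, smul_eq_mul, inv_mul_cancel₀ hs, mul_one]
  simp only [add_vecMulVec, vecMulVec_add, vecMulVec_smul, smul_vecMulVec]
  module

theorem bfgs_factored_update_general (D : ℕ)
    (B C : Matrix (Fin D) (Fin D) ℝ) (hB : B.PosDef) (hBC : B = C * Cᵀ)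
    (s y : Fin D → ℝ) (hsy : 0 < s ⬝ᵥ y)
    (v u : Fin D → ℝ) (C' : Matrix (Fin D) (Fin D) ℝ)
    (hv : v = (s ⬝ᵥ B.mulVec s)⁻¹ • s)
    (hu : u = Real.sqrt ((s ⬝ᵥ B.mulVec s) / (s ⬝ᵥ y)) • y + B.mulVec s)
    (hC' : C' = (1 - vecMulVec u v) * C) :
    C' * C'ᵀ = B - (s ⬝ᵥ B.mulVec s)⁻¹ • (vecMulVec (B.mulVec s) (B.mulVec s))
        + (s ⬝ᵥ y)⁻¹ • vecMulVec y y := by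
  have hs : s ≠ 0 := by rintro rfl; simp at hsy
  have hsBs : 0 < s ⬝ᵥ B *ᵥ s := by simpa using hB.dotProduct_mulVec_pos hs
  have hC'C' : C' * C'ᵀ = (1 - vecMulVec u v) * B * (1 - vecMulVec u v)ᵀ := by
    rw [hC', transpose_mul, hBC, Matrix.mul_assoc, Matrix.mul_assoc, Matrix.mul_assoc]
  have hsqrt : (s ⬝ᵥ B *ᵥ s)⁻¹ * √((s ⬝ᵥ B *ᵥ s) / (s ⬝ᵥ y)) * √((s ⬝ᵥ B *ᵥ s) / (s ⬝ᵥ y)) =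
      (s ⬝ᵥ y)⁻¹ := by
    rw [mul_assoc, Real.mul_self_sqrt (by positivity), div_eq_mul_inv,
      inv_mul_cancel_left₀ hsBs.ne']
  rw [hC'C', hu, hv, one_sub_vecMulVec_add_mulVec_mul_mul_transpose
    (hBC ▸ isSymm_mul_transpose_self C) _ _ hsBs.ne', smul_vecMulVec, vecMulVec_smul, smul_smul,
    smul_smul, hsqrt]

/-- The rank-one factored BFGS update yields a Cholesky-type factorization of the
direct BFGS update of `B`. -/
theorem bfgs_factored_update (D : ℕ) (hD : 1 ≤ D)
    (B C : Matrix (Fin D) (Fin D) ℝ) (hB : B.PosDef) (hBC : B = C * Cᵀ)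
    (s y : Fin D → ℝ) (hsy : 0 < s ⬝ᵥ y)
    (v u : Fin D → ℝ) (C' : Matrix (Fin D) (Fin D) ℝ)
    (hv : v = (s ⬝ᵥ B.mulVec s)⁻¹ • s)
    (hu : u = Real.sqrt ((s ⬝ᵥ B.mulVec s) / (s ⬝ᵥ y)) • y + B.mulVec s)
    (hC' : C' = (1 - vecMulVec u v) * C) :
    C' * C'ᵀ = B - (s ⬝ᵥ B.mulVec s)⁻¹ • (vecMulVec (B.mulVec s) (B.mulVec s))
        + (s ⬝ᵥ y)⁻¹ • vecMulVec y y :=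
  bfgs_factored_update_general D B C hB hBC s y hsy v u C' hv hu hC'
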